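/- arXiv:2510.16869 — 3 statements merged into one kernel-verified Lean document; each statement's English description precedes it below -/
import Mathlib

section
/- For any x, y > 0, the Bregman divergence of the generalized negative entropy h(u) = u·log u − u satisfies V_h(y,x) := y·log(y/x) − y + x ≥ (y−x)²/(2·max(x,y)). -/
/-!
Both cases reduce, after dividing by `y` and substituting the ratio `x / y`, to a classical
bound on the logarithm. For `y ≤ x` and `s = x / y ≥ 1` the bound is `log s ≤ (s - s⁻¹) / 2`,
which is `w ≤ sinh w` at `w = log s`. For `x ≤ y` and `u = 1 - x / y ∈ [0, 1)` it is
`u + u² / 2 ≤ -log (1 - u)`, the two-term truncation of the nonnegative series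
`-log (1 - u) = ∑ uⁿ / n`.
-/

namespace Real

theorem log_le_half_sub_inv {s : ℝ} (hs : 1 ≤ s) : log s ≤ (s - s⁻¹) / 2 := by
  have h := self_le_sinh_iff.mpr (log_nonneg hs)
  rwa [sinh_eq, exp_neg, exp_log (by linarith)] at h

theorem add_sq_div_two_le_neg_log_one_sub {u : ℝ} (hu0 : 0 ≤ u) (hu1 : u < 1) :
    u + u ^ 2 / 2 ≤ -log (1 - u) := by
  have h := sum_le_hasSum (Finset.range 2) (fun n _ => by positivity)
    (hasSum_pow_div_log_of_abs_lt_one (by rwa [abs_of_nonneg hu0]))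
  norm_num [Finset.sum_range_succ] at h
  exact h

end Real

open Real

theorem sq_sub_div_le_entropy_bregman_of_le {x y : ℝ} (hy : 0 < y) (h : y ≤ x) :
    (y - x) ^ 2 / (2 * x) ≤ y * log (y / x) - y + x := by
  have hx : 0 < x := hy.trans_le h
  have key := log_le_half_sub_inv ((one_le_div hy).mpr h)
  rw [← inv_div x y, log_inv]
  have e : y * ((x / y - (x / y)⁻¹) / 2) = x - y - (y - x) ^ 2 / (2 * x) := by
    field_simp
    ring
  linarith [mul_le_mul_of_nonneg_left key hy.le]

theorem sq_sub_div_le_entropy_bregman_of_ge {x y : ℝ} (hx : 0 < x) (h : x ≤ y) :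
    (y - x) ^ 2 / (2 * y) ≤ y * log (y / x) - y + x := by
  have hy : 0 < y := hx.trans_le h
  have key := add_sq_div_two_le_neg_log_one_sub (u := 1 - x / y)
    (sub_nonneg.mpr ((div_le_one hy).mpr h)) (by linarith [div_pos hx hy])
  rw [sub_sub_cancel, ← log_inv, inv_div] at key
  have e : y * (1 - x / y + (1 - x / y) ^ 2 / 2) = y - x + (y - x) ^ 2 / (2 * y) := by
    field_simp
  linarith [mul_le_mul_of_nonneg_left key hy.le]

theorem bregman_entropy_lower_bound
    (x y : ℝ) (hx : 0 < x) (hy : 0 < y) :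
    y * Real.log (y / x) - y + x ≥ (y - x) ^ 2 / (2 * max x y) := by
  rcases le_total y x with h | h
  · rw [max_eq_left h]
    exact sq_sub_div_le_entropy_bregman_of_le hy h
  · rw [max_eq_right h]
    exact sq_sub_div_le_entropy_bregman_of_ge hx h
end

section
/- Let g₁,…,g_T satisfy max(−1, −1/λ_t) ≤ g_t ≤ 1 where λ₁ = 1, λ_{t+1} = λ_t·exp(−α·g_t), and α = 1/√T with T ≥ 1. Then Σ_{t=1}^T λ_t·g_t ≤ 4√T + 2√T = O(√T). -/
/-!
Write `x = α g_t`, so that `λ_t - λ_{t+1} = λ_t (1 - e^{-x})`. Second-order bounds on the exponential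
give, for `0 < α ≤ 1`, the one-step inequality `α λ_t g_t ≤ (1 + α)(λ_t - λ_{t+1}) + 3α²`: when `g_t ≥ 0`
the factor `1 + α` absorbs the quadratic term `λ_t x² / 2 ≤ α λ_t x / 2`, and when `g_t < 0` the
lower bound `λ_t g_t ≥ -1` keeps every error term of order `α²`. Summing over `t` telescopes to
`α ∑ λ_t g_t ≤ (1 + α) λ_1 + 3α² T`, which is at most `5` for `α = 1/√T`.
-/

open Finset Real

lemma Real.exp_neg_le_one_sub_add_sq_div_two {y : ℝ} (hy : 0 ≤ y) :
    exp (-y) ≤ 1 - y + y ^ 2 / 2 := by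
  -- `(1 - y + y²/2) (1 + y + y²/2) = 1 + y⁴/4`
  have hq := quadratic_le_exp_of_nonneg hy
  rw [exp_neg, inv_le_iff_one_le_mul₀ (exp_pos y)]
  nlinarith [pow_two_nonneg (y ^ 2), pow_two_nonneg (y - 1)]

lemma Real.exp_le_one_add_add_sq {y : ℝ} (hy : |y| ≤ 1) : exp y ≤ 1 + y + y ^ 2 := by
  linarith [(abs_le.mp (abs_exp_sub_one_sub_id_le hy)).2]

lemma mul_mul_le_of_exp_step {α l g : ℝ} (hα0 : 0 ≤ α) (hα1 : α ≤ 1) (hl : 0 < l)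
    (hg_lb : max (-1) (-(1 / l)) ≤ g) (hg_ub : g ≤ 1) :
    α * (l * g) ≤ (1 + α) * (l - l * exp (-α * g)) + 3 * α ^ 2 := by
  have hg1 : -1 ≤ g := (le_max_left _ _).trans hg_lb
  have hlg : -1 ≤ l * g := by
    have := (le_max_right _ _).trans hg_lb
    rw [neg_div', div_le_iff₀ hl] at this
    linarith
  rcases le_or_gt 0 g with hg0 | hg0
  · set x := α * g
    have hx0 : 0 ≤ x := mul_nonneg hα0 hg0
    have hxα : x ≤ α := by nlinarith
    have hexp : exp (-x) ≤ 1 - x + x ^ 2 / 2 := exp_neg_le_one_sub_add_sq_div_two hx0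
    have hgain : x ≤ (1 + α) * (x - x ^ 2 / 2) := by nlinarith
    rw [neg_mul]
    nlinarith [mul_le_mul_of_nonneg_left hexp hl.le, mul_le_mul_of_nonneg_left hgain hl.le]
  · set y := -α * g
    have hy0 : 0 ≤ y := by nlinarith
    have hyα : y ≤ α := by nlinarith
    have hly : l * y ≤ α := by nlinarith
    have hexp : exp y ≤ 1 + y + y ^ 2 :=
      exp_le_one_add_add_sq (abs_le.mpr ⟨by linarith, hyα.trans hα1⟩)
    have hly2 : l * y * y ≤ α * α := mul_le_mul hly hyα hy0 hα0
    have hlα : α * (l * g) = -(l * y) := by ring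
    rw [hlα]
    nlinarith [mul_le_mul_of_nonneg_left hexp hl.le, mul_nonneg hl.le hy0]

section ExpUpdate

variable {α : ℝ} {g lam : ℕ → ℝ}

lemma pos_of_exp_update (hlam1 : 0 < lam 1)
    (hlam_rec : ∀ t, lam (t + 1) = lam t * exp (-α * g t)) {t : ℕ} (ht : 1 ≤ t) :
    0 < lam t := by
  induction t, ht using Nat.le_induction with
  | base => exact hlam1
  | succ n _ ih => rw [hlam_rec n]; exact mul_pos ih (exp_pos _)

theorem mul_sum_le_of_exp_update (hα0 : 0 ≤ α) (hα1 : α ≤ 1) {T : ℕ} (hT : 1 ≤ T)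
    (hlam1 : 0 < lam 1) (hlam_rec : ∀ t, lam (t + 1) = lam t * exp (-α * g t))
    (hg_lb : ∀ t ∈ Icc 1 T, max (-1) (-(1 / lam t)) ≤ g t)
    (hg_ub : ∀ t ∈ Icc 1 T, g t ≤ 1) :
    α * ∑ t ∈ Icc 1 T, lam t * g t ≤ (1 + α) * lam 1 + 3 * α ^ 2 * T := by
  have hpos : ∀ t, 1 ≤ t → 0 < lam t := fun t ht => pos_of_exp_update hlam1 hlam_rec ht
  have htel : ∑ t ∈ Icc 1 T, (lam t - lam (t + 1)) = lam 1 - lam (T + 1) := by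
    rw [← neg_sub, ← sum_Icc_sub hT lam, ← sum_neg_distrib]
    simp only [neg_sub]
  calc α * ∑ t ∈ Icc 1 T, lam t * g t
      ≤ ∑ t ∈ Icc 1 T, ((1 + α) * (lam t - lam (t + 1)) + 3 * α ^ 2) := by
        rw [mul_sum]
        refine sum_le_sum fun t ht => ?_
        rw [hlam_rec t]
        exact mul_mul_le_of_exp_step hα0 hα1 (hpos t (mem_Icc.mp ht).1) (hg_lb t ht) (hg_ub t ht)
    _ = (1 + α) * (lam 1 - lam (T + 1)) + 3 * α ^ 2 * T := by
        rw [sum_add_distrib, ← mul_sum, htel, sum_const, Nat.card_Icc, nsmul_eq_mul]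
        push_cast
        ring
    _ ≤ (1 + α) * lam 1 + 3 * α ^ 2 * T := by nlinarith [hpos (T + 1) (by omega)]

end ExpUpdate

theorem weighted_lagrangian_sum_bound
    (T : ℕ) (hT : 1 ≤ T)
    (g lam : ℕ → ℝ)
    (hlam1 : lam 1 = 1)
    (hlam_rec : ∀ t, lam (t + 1) = lam t * Real.exp (-(1 / Real.sqrt T) * g t))
    (hg_lb : ∀ t ∈ Finset.Icc 1 T, max (-1) (-(1 / lam t)) ≤ g t)
    (hg_ub : ∀ t ∈ Finset.Icc 1 T, g t ≤ 1) :
    ∑ t ∈ Finset.Icc 1 T, lam t * g t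
      ≤ 4 * Real.sqrt T + 2 * Real.sqrt T := by
  have hs1 : 1 ≤ √(T : ℝ) := one_le_sqrt.mpr (by exact_mod_cast hT)
  have hα0 : 0 ≤ 1 / √(T : ℝ) := by positivity
  have hα1 : 1 / √(T : ℝ) ≤ 1 := (div_le_one (by positivity)).mpr hs1
  have hαT : (1 / √(T : ℝ)) ^ 2 * T = 1 := by
    rw [div_pow, sq_sqrt (Nat.cast_nonneg T)]
    field_simp
  have key := mul_sum_le_of_exp_update hα0 hα1 hT (hlam1 ▸ one_pos) hlam_rec hg_lb hg_ub
  rw [hlam1, mul_assoc 3, hαT, one_div_mul_eq_div, div_le_iff₀ (by positivity)] at key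
  nlinarith
end

section
/- Consider the competing bid distribution with P(d=0) = P(d=1) = 1/2, a single round (T=1) with value v = 1/2 and target ROI ratio ρ = 1, ties broken in favor of the bidder. Every deterministic bid b ∈ [0,1] satisfying the ROI constraint b·F(b) ≤ v·F(b) yields expected reward at most 1/4, while the randomized strategy bidding 0 with probability 2/3 and 1 with probability 1/3 satisfies the ROI constraint in expectation and yields expected reward 1/3 > 1/4. -/
/-!
A bid below 1 wins only against `d = 0`, so it earns `v / 2 = 1 / 4`; the bid 1 always wins but
pays `1 > v`, violating the ROI constraint. Mixing the bids 0 and 1 with weights `2 / 3` and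
`1 / 3` makes the ROI constraint bind in expectation while earning `1 / 3`.
-/

open Set

lemma deterministic_reward_le_quarter {F : ℝ → ℝ} (hF : ∀ b ∈ Ico (0:ℝ) 1, F b = 1 / 2)
    (h1 : F 1 = 1) {b : ℝ} (hb : b ∈ Icc (0:ℝ) 1) (hroi : b * F b ≤ (1 / 2) * F b) :
    (1 / 2) * F b ≤ 1 / 4 := by
  rcases hb.2.lt_or_eq with hlt | rfl
  · rw [hF b ⟨hb.1, hlt⟩]
    norm_num
  · rw [h1] at hroi
    norm_num at hroi

theorem randomized_beats_deterministic :
    ∀ F : ℝ → ℝ, (∀ b ∈ Ico (0:ℝ) 1, F b = 1 / 2) → F 1 = 1 →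
    (∀ b ∈ Icc (0:ℝ) 1, b * F b ≤ (1 / 2) * F b → (1 / 2) * F b ≤ 1 / 4) ∧
    ((2 / 3) * (0 * F 0) + (1 / 3) * (1 * F 1)
      ≤ (2 / 3) * ((1 / 2) * F 0) + (1 / 3) * ((1 / 2) * F 1)) ∧
    ((2 / 3) * ((1 / 2) * F 0) + (1 / 3) * ((1 / 2) * F 1) = 1 / 3) ∧
    ((1 / 4 : ℝ) < 1 / 3) := by
  intro F hF h1
  have h0 : F 0 = 1 / 2 := hF 0 ⟨le_rfl, one_pos⟩
  refine ⟨fun b hb hroi ↦ deterministic_reward_le_quarter hF h1 hb hroi, ?_, ?_, by norm_num⟩ <;>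
  · rw [h0, h1]
    norm_num
end
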